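/- arXiv:0807.4065 — 2 statements merged into one kernel-verified Lean document; each statement's English description precedes it below -/
import Mathlib

section
/- Let T = {t_{𝔭_1}, …, t_{𝔭_g}} be the set of f-complete types produced by Montes' algorithm, in bijection with the primes 𝔭_1,…,𝔭_g of Z_K above p, and for each 𝔭 let β_𝔭 ∈ K be the element with v_𝔭(β_𝔭) = 1 constructed from t_𝔭. Define recursively, starting from the types maximal for the dominance ordering (for which α̃_𝔭 := β_𝔭): α̃_𝔭 := β_𝔭 · ∏_{t_𝔮 > t_𝔭} α̃_𝔮^{−v_𝔮(β_𝔭)}. Then for all primes 𝔭, 𝔮 of Z_K above p: v_𝔮(α̃_𝔭) = 1 if 𝔮 = 𝔭, and v_𝔮(α̃_𝔭) = 0 otherwise. -/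
open NumberField IsDedekindDomain
open scoped WithZero

/-!
Write `π` for the value of a uniformiser. Well-founded induction along the dominance order: if
`v_j(α_k) = π^[j = k]` for every `k` dominating `i`, then the product in the recursion for `α_i`
has `v_j`-value `π^(-n j i)` when `j` dominates `i` and `1` otherwise, which cancels exactly the
contribution `π^(n j i)` of `β_i` at the dominating `j`; at `j = i` only `v_i(β_i) = π` survives,
and at the remaining `j` already `n j i = 0`.
-/

section DominanceRecursion

variable {ι M : Type*} [Fintype ι] [CommGroupWithZero M]
  {D : ι → ι → Prop} [DecidableRel D] {π : M} {n : ι → ι → ℤ}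

lemma prod_dominating_eq_ite [DecidableEq ι] {w : ι → M} {i j : ι}
    (hw : ∀ k, D k i → w k = if j = k then π else 1) :
    ∏ k ∈ Finset.univ.filter (fun k => D k i), w k ^ (-(n k i))
      = if D j i then π ^ (-(n j i)) else 1 := by
  rw [Finset.prod_congr rfl fun k hk => by
    rw [hw k (Finset.mem_filter.mp hk).2, apply_ite (· ^ (-(n k i))), one_zpow]]
  simp

variable {K F : Type*} [CommGroupWithZero K] [FunLike F K M] [MonoidWithZeroHomClass F K M]
  {v : ι → F} {β α : ι → K}

lemma map_eq_zpow_mul_prod_of_recursion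
    (hrec : ∀ i, α i = β i * ∏ j ∈ Finset.univ.filter (fun j => D j i), α j ^ (-(n j i)))
    (hβ : ∀ i j, v j (β i) = π ^ n j i) (i j : ι) :
    v j (α i) = π ^ n j i * ∏ k ∈ Finset.univ.filter (fun k => D k i), v j (α k) ^ (-(n k i)) := by
  rw [hrec i, map_mul, map_prod, hβ]
  simp_rw [map_zpow₀]

theorem map_eq_ite_of_dominance_recursion [DecidableEq ι] (hD : WellFounded D)
    (hrec : ∀ i, α i = β i * ∏ j ∈ Finset.univ.filter (fun j => D j i), α j ^ (-(n j i)))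
    (hπ : π ≠ 0) (hβ : ∀ i j, v j (β i) = π ^ n j i) (hself : ∀ i, n i i = 1)
    (hzero : ∀ i j, j ≠ i → ¬ D j i → n j i = 0) (i j : ι) :
    v j (α i) = if j = i then π else 1 := by
  induction i using hD.induction generalizing j with
  | _ i ih =>
    rw [map_eq_zpow_mul_prod_of_recursion hrec hβ, prod_dominating_eq_ite fun k hk => ih k hk j]
    by_cases hji : j = i
    · subst hji
      simp [hD.irrefl.irrefl, hself]
    · by_cases hDji : D j i
      · simp [hji, hDji, mul_inv_cancel₀ (zpow_ne_zero _ hπ)]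
      · simp [hji, hDji, hzero i j hji hDji]

end DominanceRecursion

theorem stmt_10_general (K : Type*) [Field K] [NumberField K]
    (g : ℕ) (q : Fin g → HeightOneSpectrum (𝓞 K))
    -- the dominance ordering on the complete types produced by the algorithm
    (D : Fin g → Fin g → Prop) [DecidableRel D]
    (hDirr : ∀ i, ¬ D i i) (hDtrans : ∀ i j k, D i j → D j k → D i k)
    -- the elements β_𝔭 and the integers n j i = v_{q j}(β i)
    (β : Fin g → K) (n : Fin g → Fin g → ℤ)
    (hn : ∀ i j, (q j).valuation K (β i)
      = (↑(Multiplicative.ofAdd (-(n j i))) : ℤᵐ⁰))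
    (hself : ∀ i, n i i = 1)
    (hzero : ∀ i j, j ≠ i → ¬ D j i → n j i = 0)
    -- the recursively defined elements α̃
    (α : Fin g → K)
    (hrec : ∀ i, α i = β i
      * ∏ j ∈ Finset.univ.filter (fun j => D j i), α j ^ (-(n j i))) :
    ∀ i j, (q j).valuation K (α i)
      = if j = i then (↑(Multiplicative.ofAdd (-1 : ℤ)) : ℤᵐ⁰) else 1 := by
  have : IsTrans (Fin g) D := ⟨hDtrans⟩
  have : Std.Irrefl D := ⟨hDirr⟩
  have hβ : ∀ i j, (q j).valuation K (β i) = WithZero.exp (-1 : ℤ) ^ n j i := fun i j => by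
    rw [hn, ← WithZero.exp_zsmul, smul_neg, zsmul_one, Int.cast_id, WithZero.exp]
  exact map_eq_ite_of_dominance_recursion (v := fun j => (q j).valuation K)
    (Finite.wellFounded_of_trans_of_irrefl D) hrec WithZero.exp_ne_zero hβ hself hzero

/-- **Multipliers `α̃_𝔭` attached to the output of Montes' algorithm.**
Let `q 1, …, q g` be the prime ideals of `𝓞 K` above `p`, in bijection with the complete
types produced by Montes' algorithm, and for each `i` let `β i ∈ K` be the element attached
to `q i`, with `v_{q i}(β i) = 1` (`n j i` denotes `v_{q j}(β i)`).  Let `D j i` be the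
dominance relation «`t_{q j}` dominates `t_{q i}`» (a strict partial order), so that
`n j i = 0` whenever `j ≠ i` and `¬ D j i`.  If `α̃` satisfies the recursion
`α̃ i = β i · ∏_{D j i} (α̃ j)^{−n j i}` (starting from the dominance-maximal types, for
which the product is empty), then `v_{q j}(α̃ i) = 1` if `j = i` and `= 0` otherwise. -/
theorem stmt_10 (K : Type*) [Field K] [NumberField K] (p : ℕ) (hp : p.Prime)
    (f : Polynomial ℤ) (hf : f.Monic) (hfirr : Irreducible f)
    (θ : K) (hroot : Polynomial.aeval θ f = 0) (hgen : Algebra.adjoin ℚ {θ} = ⊤)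
    (g : ℕ) (q : Fin g → HeightOneSpectrum (𝓞 K))
    (hqinj : Function.Injective q)
    (hqp : ∀ i, (p : 𝓞 K) ∈ (q i).asIdeal)
    (hqsurj : ∀ Q : HeightOneSpectrum (𝓞 K), (p : 𝓞 K) ∈ Q.asIdeal → ∃ i, q i = Q)
    -- the dominance ordering on the complete types produced by the algorithm
    (D : Fin g → Fin g → Prop) [DecidableRel D]
    (hDirr : ∀ i, ¬ D i i) (hDtrans : ∀ i j k, D i j → D j k → D i k)
    -- the elements β_𝔭 and the integers n j i = v_{q j}(β i)
    (β : Fin g → K) (n : Fin g → Fin g → ℤ)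
    (hn : ∀ i j, (q j).valuation K (β i)
      = (↑(Multiplicative.ofAdd (-(n j i))) : ℤᵐ⁰))
    (hself : ∀ i, n i i = 1)
    (hzero : ∀ i j, j ≠ i → ¬ D j i → n j i = 0)
    -- the recursively defined elements α̃
    (α : Fin g → K)
    (hrec : ∀ i, α i = β i
      * ∏ j ∈ Finset.univ.filter (fun j => D j i), α j ^ (-(n j i))) :
    ∀ i j, (q j).valuation K (α i)
      = if j = i then (↑(Multiplicative.ofAdd (-1 : ℤ)) : ℤᵐ⁰) else 1 :=
  stmt_10_general K g q D hDirr hDtrans β n hn hself hzero α hrec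
end

section
/- Let t ≥ 1 and let (x_0, y_0), (x_1, y_1), …, (x_t, y_t) ∈ Z² with 0 = x_0 < x_1 < … < x_t and y_0 > y_1 > … > y_t, such that the slopes (y_i − y_{i−1})/(x_i − x_{i−1}) are strictly increasing in i. Let N : [0, x_t] → R be the piecewise linear convex function with these vertices, and set E_i = x_i − x_{i−1}, H_i = y_{i−1} − y_i, d_i = gcd(E_i, H_i). Then the number of points (a, b) ∈ Z² with 1 ≤ a ≤ x_t, b > y_t and b ≤ N(a) equals Σ_{i=1}^{t} (E_iH_i − E_i − H_i + d_i)/2 + Σ_{1 ≤ i < j ≤ t} E_iH_j. -/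
/-!
Count the lattice points column by column. The column at abscissa `x_{i-1} + k`, `0 < k ≤ E_i`,
contains `(y_{i-1} - y_t) - ⌈H_i k / E_i⌉` points. Pairing `k` with `E_i - k` turns each ceiling
into `H_i` minus a floor, and `⌈q⌉ - ⌊q⌋ = 1` exactly when `q` is not an integer, which happens for
all but `d_i` values of `k`; hence `2 Σ_k ⌈H_i k / E_i⌉ = E_iH_i + E_i + H_i - d_i`. What remains is
the summation by parts `Σ_i E_i (y_{i-1} - y_t) = Σ_i E_iH_i + Σ_{i<j} E_iH_j`.
-/

open Finset

namespace Int

lemma cast_div_mem_range_cast_iff {m n : ℤ} (hn : n ≠ 0) :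
    ((m : ℚ) / n ∈ Set.range Int.cast) ↔ n ∣ m := by
  constructor
  · rintro ⟨c, hc⟩
    rw [eq_div_iff (by exact_mod_cast hn)] at hc
    exact ⟨c, by rw [mul_comm]; exact_mod_cast hc.symm⟩
  · rintro ⟨c, rfl⟩
    exact ⟨c, by push_cast; field_simp⟩

lemma card_filter_dvd_mul_Ioc {E : ℤ} (hE : 0 < E) (H : ℤ) :
    (#{k ∈ Ioc 0 E | E ∣ H * k} : ℤ) = (E.gcd H : ℤ) := by
  set g : ℤ := (E.gcd H : ℤ)
  have hg : 0 < g := Int.natCast_pos.2 (Int.gcd_pos_of_ne_zero_left H hE.ne')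
  obtain ⟨e, he⟩ : g ∣ E := Int.gcd_dvd_left E H
  have he0 : 0 < e := pos_of_mul_pos_right (he ▸ hE) hg.le
  have hdvd (k : ℤ) : E ∣ H * k ↔ e ∣ k := by
    rw [← dvd_gcd_mul_iff_dvd_mul]
    change E ∣ g * k ↔ e ∣ k
    conv_lhs => rw [he]
    exact mul_dvd_mul_iff_left hg.ne'
  rw [filter_congr fun k _ => hdvd k, Int.Ioc_filter_dvd_card 0 E he0, he]
  push_cast
  rw [mul_div_cancel_right₀ _ (by exact_mod_cast he0.ne'), zero_div, floor_intCast, floor_zero]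
  omega

lemma sum_Ioc_reflect {M : Type*} [AddCommMonoid M] (f : ℤ → M) (a b : ℤ) :
    ∑ k ∈ Ioc a b, f (a + b - k) = ∑ k ∈ Ico a b, f k :=
  sum_nbij' (fun k => a + b - k) (fun k => a + b - k)
    (fun k hk => by simp only [mem_Ioc, mem_Ico] at hk ⊢; omega)
    (fun k hk => by simp only [mem_Ioc, mem_Ico] at hk ⊢; omega)
    (fun k _ => sub_sub_cancel _ _) (fun k _ => sub_sub_cancel _ _) (fun k _ => rfl)

end Int

lemma two_mul_sum_ceil_mul_div {E : ℤ} (hE : 0 < E) (H : ℤ) :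
    2 * ∑ k ∈ Ioc 0 E, ⌈(H * k : ℚ) / E⌉ = E * H + E + H - E.gcd H := by
  have hE' : (E : ℚ) ≠ 0 := by exact_mod_cast hE.ne'
  set q : ℤ → ℚ := fun k => (H * k : ℚ) / E
  have hdiff : ∑ k ∈ Ioc 0 E, (⌈q k⌉ - ⌊q k⌋) = E - E.gcd H := by
    have hite (k : ℤ) : ⌈q k⌉ - ⌊q k⌋ = if E ∣ H * k then 0 else 1 := by
      have hmem : q k ∈ Set.range Int.cast ↔ E ∣ H * k := by
        rw [← Int.cast_div_mem_range_cast_iff hE.ne', Int.cast_mul]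
      split_ifs with h
      · obtain ⟨c, hc⟩ := hmem.2 h
        rw [← hc, Int.ceil_intCast, Int.floor_intCast, sub_self]
      · rw [(Int.ceil_eq_floor_add_one_iff_notMem _).2 (hmem.not.2 h), add_sub_cancel_left]
    have hsplit := card_filter_add_card_filter_not (s := Ioc 0 E) (p := fun k => E ∣ H * k)
    have hcard : (#(Ioc 0 E) : ℤ) = E := by rw [Int.card_Ioc, sub_zero, Int.toNat_of_nonneg hE.le]
    simp only [hite, sum_ite, sum_const_zero, sum_const, nsmul_eq_mul, mul_one, zero_add]
    have := Int.card_filter_dvd_mul_Ioc hE H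
    omega
  have hreflect (k : ℤ) : ⌊q k⌋ = H - ⌈q (0 + E - k)⌉ := by
    have : q (0 + E - k) = H + -q k := by simp only [q]; push_cast; field_simp; ring
    rw [this, Int.ceil_intCast_add, Int.ceil_neg]
    ring
  have hends : ∑ k ∈ Ico 0 E, ⌈q k⌉ + H = ∑ k ∈ Ioc 0 E, ⌈q k⌉ := by
    have hq0 : ⌈q 0⌉ = 0 := by
      simp only [q, Int.cast_zero, mul_zero, zero_div, Int.ceil_zero]
    have hqE : ⌈q E⌉ = H := by simp only [q]; rw [mul_div_cancel_right₀ _ hE', Int.ceil_intCast]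
    rw [← hqE, sum_Ico_add_eq_sum_Icc hE.le, ← add_sum_Ioc_eq_sum_Icc hE.le, hq0, zero_add]
  have hfloor : ∑ k ∈ Ioc 0 E, ⌊q k⌋ = E * H - ∑ k ∈ Ico 0 E, ⌈q k⌉ := by
    rw [sum_congr rfl fun k _ => hreflect k, sum_sub_distrib, Int.sum_Ioc_reflect (fun k => ⌈q k⌉),
      sum_const, Int.card_Ioc, sub_zero, nsmul_eq_mul, Int.toNat_of_nonneg hE.le]
  rw [sum_sub_distrib] at hdiff
  linarith

lemma sum_ceil_mul_div_eq {E : ℤ} (hE : 0 < E) (H : ℤ) :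
    ∑ k ∈ Ioc 0 E, ⌈(H * k : ℚ) / E⌉ = E * H - (E * H - E - H + E.gcd H) / 2 := by
  have := two_mul_sum_ceil_mul_div hE H
  omega

lemma ncard_setOf_mem_lt_le (s : Finset ℤ) (f : ℤ → ℤ) (c : ℤ) :
    ({q : ℤ × ℤ | q.1 ∈ s ∧ c < q.2 ∧ q.2 ≤ f q.1}.ncard : ℤ) =
      ∑ a ∈ s, ((f a - c).toNat : ℤ) := by
  classical
  have hset : {q : ℤ × ℤ | q.1 ∈ s ∧ c < q.2 ∧ q.2 ≤ f q.1} =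
      (s.biUnion fun a => ({a} : Finset ℤ) ×ˢ Ioc c (f a) : Finset (ℤ × ℤ)) := by
    ext ⟨a, b⟩
    simp only [Set.mem_ofPred_eq, coe_biUnion, mem_coe, coe_product, coe_singleton, coe_Ioc,
      Set.mem_iUnion, Set.mem_prod, Set.mem_singleton_iff, Set.mem_Ioc, exists_prop]
    exact ⟨fun ⟨ha, hb⟩ => ⟨a, ha, rfl, hb⟩, fun ⟨_, ha, rfl, hb⟩ => ⟨ha, hb⟩⟩
  have hdisj : (s : Set ℤ).PairwiseDisjoint fun a => ({a} : Finset ℤ) ×ˢ Ioc c (f a) := by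
    intro a _ b _ hab
    simp only [Function.onFun, disjoint_left, mem_product, mem_singleton]
    rintro q ⟨rfl, -⟩ ⟨h, -⟩
    exact hab h
  rw [hset, Set.ncard_coe_finset, card_biUnion hdisj]
  simp only [singleton_product, card_map, Int.card_Ioc, Nat.cast_sum]

lemma Finset.sum_Ioc_eq_sum_range_sum_Ioc {M : Type*} [AddCommMonoid M] {X : ℕ → ℤ}
    (hX : Monotone X) (f : ℤ → M) (t : ℕ) :
    ∑ a ∈ Ioc (X 0) (X t), f a = ∑ i ∈ range t, ∑ a ∈ Ioc (X i) (X (i + 1)), f a := by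
  induction t with
  | zero => simp
  | succ t ih =>
    rw [sum_range_succ, ← ih, ← sum_union (Ioc_disjoint_Ioc_of_le le_rfl),
      Ioc_union_Ioc_eq_Ioc (hX t.zero_le) (hX t.le_succ)]

lemma sum_mul_sub_eq_sum_mul_add_sum_sum_ite {E H Y : ℕ → ℤ} (hH : ∀ i, H i = Y i - Y (i + 1))
    (t : ℕ) :
    ∑ i ∈ range t, E i * (Y i - Y t) =
      ∑ i ∈ range t, E i * H i + ∑ i ∈ range t, ∑ j ∈ range t, if i < j then E i * H j else 0 := by
  rw [← sum_add_distrib]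
  refine sum_congr rfl fun i hi => ?_
  have htel : Y i - Y t = ∑ j ∈ range t, if i ≤ j then H j else 0 := by
    have hIco : (range t).filter (i ≤ ·) = Ico i t := by ext j; simp only [mem_filter, mem_range, mem_Ico]; omega
    rw [← sum_filter, hIco]
    have := sum_Ico_sub (fun j => -Y j) (mem_range.1 hi).le
    simp only [neg_sub_neg] at this
    simp only [hH, this]
  have hsplit (j : ℕ) : E i * (if i ≤ j then H j else 0) =
      (if i = j then E i * H j else 0) + (if i < j then E i * H j else 0) := by
    split_ifs <;> simp <;> omega
  rw [htel, mul_sum, sum_congr rfl fun j _ => hsplit j, sum_add_distrib, sum_ite_eq, if_pos hi]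

section Polygon

variable {N : ℚ → ℚ} {p u E H : ℤ}

lemma floor_add_eq_sub_ceil
    (hN : ∀ a : ℚ, p ≤ a → a ≤ p + E → N a = u - H / E * (a - p)) {k : ℤ} (hk : k ∈ Ioc 0 E) :
    ⌊N (p + k : ℤ)⌋ = u - ⌈(H * k : ℚ) / E⌉ := by
  rw [mem_Ioc] at hk
  rw [hN _ (by push_cast; linarith [(Int.cast_pos (R := ℚ)).2 hk.1])
    (by push_cast; linarith [(Int.cast_le (R := ℚ)).2 hk.2])]
  rw [show (u : ℚ) - H / E * ((p + k : ℤ) - p) = u + -((H * k : ℚ) / E) by push_cast; ring,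
    Int.floor_intCast_add, Int.floor_neg, sub_eq_add_neg]

lemma sum_Ioc_toNat_floor_sub {c : ℤ} (hE : 0 < E) (hH : 0 ≤ H) (hc : c ≤ u - H)
    (hN : ∀ a : ℚ, p ≤ a → a ≤ p + E → N a = u - H / E * (a - p)) :
    ∑ a ∈ Ioc p (p + E), ((⌊N a⌋ - c).toNat : ℤ) =
      E * (u - c) - ∑ k ∈ Ioc 0 E, ⌈(H * k : ℚ) / E⌉ := by
  have hterm (k : ℤ) (hk : k ∈ Ioc 0 E) :
      ((⌊N (p + k : ℤ)⌋ - c).toNat : ℤ) = (u - c) - ⌈(H * k : ℚ) / E⌉ := by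
    have hceil : ⌈(H * k : ℚ) / E⌉ ≤ H := by
      rw [Int.ceil_le, div_le_iff₀ (by exact_mod_cast hE)]
      exact_mod_cast mul_le_mul_of_nonneg_left (mem_Ioc.1 hk).2 hH
    rw [floor_add_eq_sub_ceil hN hk, Int.toNat_of_nonneg (by omega)]
    ring
  have hshift : Ioc p (p + E) = (Ioc 0 E).map (addLeftEmbedding p) := by
    rw [map_add_left_Ioc, add_zero]
  rw [hshift, sum_map]
  simp only [addLeftEmbedding_apply]
  rw [sum_congr rfl hterm, sum_sub_distrib, sum_const, Int.card_Ioc, sub_zero,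
    nsmul_eq_mul, Int.toNat_of_nonneg hE.le]

end Polygon

theorem ncard_latticePoints_under_polygon {t : ℕ} {X Y E H : ℕ → ℤ} {N : ℚ → ℚ}
    (hX : Monotone X) (hY : Antitone Y) (hE : ∀ i, E i = X (i + 1) - X i)
    (hH : ∀ i, H i = Y i - Y (i + 1)) (hE_pos : ∀ i < t, 0 < E i)
    (hN : ∀ i < t, ∀ a : ℚ, X i ≤ a → a ≤ X (i + 1) → N a = Y i - H i / E i * (a - X i)) :
    ({q : ℤ × ℤ | X 0 < q.1 ∧ q.1 ≤ X t ∧ Y t < q.2 ∧ (q.2 : ℚ) ≤ N q.1}.ncard : ℤ) =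
      ∑ i ∈ range t, (E i * H i - E i - H i + (E i).gcd (H i)) / 2 +
        ∑ i ∈ range t, ∑ j ∈ range t, if i < j then E i * H j else 0 := by
  have hset : {q : ℤ × ℤ | X 0 < q.1 ∧ q.1 ≤ X t ∧ Y t < q.2 ∧ (q.2 : ℚ) ≤ N q.1} =
      {q | q.1 ∈ Ioc (X 0) (X t) ∧ Y t < q.2 ∧ q.2 ≤ ⌊N q.1⌋} := by
    ext q
    simp only [Set.mem_ofPred_eq, mem_Ioc, Int.le_floor, and_assoc]
  have hseg (i : ℕ) (hi : i ∈ range t) :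
      ∑ a ∈ Ioc (X i) (X (i + 1)), ((⌊N a⌋ - Y t).toNat : ℤ) =
        E i * (Y i - Y t) - E i * H i + (E i * H i - E i - H i + (E i).gcd (H i)) / 2 := by
    have hi := mem_range.1 hi
    have hXs : X (i + 1) = X i + E i := by rw [hE]; ring
    have hH_nonneg : 0 ≤ H i := by rw [hH]; linarith [hY i.le_succ]
    have hYt : Y t ≤ Y i - H i := by rw [hH]; linarith [hY hi]
    have hN' (a : ℚ) (h₁ : X i ≤ a) (h₂ : a ≤ X i + E i) : N a = Y i - H i / E i * (a - X i) :=
      hN i hi a h₁ (by rw [hXs]; push_cast; exact h₂)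
    rw [hXs, sum_Ioc_toNat_floor_sub (hE_pos i hi) hH_nonneg hYt hN',
      sum_ceil_mul_div_eq (hE_pos i hi)]
    ring
  rw [hset, ncard_setOf_mem_lt_le _ (fun a => ⌊N a⌋), sum_Ioc_eq_sum_range_sum_Ioc hX,
    sum_congr rfl hseg, sum_add_distrib, sum_sub_distrib, sum_mul_sub_eq_sum_mul_add_sum_sum_ite hH]
  ring

theorem stmt_13_general (t : ℕ) (x y : Fin (t + 1) → ℤ)
    (hx0 : x 0 = 0) (hx : StrictMono x) (hy : StrictAnti y)
    (N : ℚ → ℚ)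
    (hN : ∀ i : Fin t, ∀ a : ℚ, (x i.castSucc : ℚ) ≤ a → a ≤ (x i.succ : ℚ) →
      N a = (y i.castSucc : ℚ)
        + ((y i.succ : ℚ) - (y i.castSucc : ℚ)) / ((x i.succ : ℚ) - (x i.castSucc : ℚ))
          * (a - (x i.castSucc : ℚ)))
    (E H : Fin t → ℤ)
    (hE : ∀ i, E i = x i.succ - x i.castSucc)
    (hH : ∀ i, H i = y i.castSucc - y i.succ)
    (d : Fin t → ℤ) (hd : ∀ i, d i = Int.gcd (E i) (H i)) :
    ({q : ℤ × ℤ | 1 ≤ q.1 ∧ q.1 ≤ x (Fin.last t) ∧ y (Fin.last t) < q.2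
        ∧ (q.2 : ℚ) ≤ N (q.1 : ℚ)}.ncard : ℤ)
      = ∑ i, (E i * H i - E i - H i + d i) / 2
        + ∑ i, ∑ j, (if i < j then E i * H j else 0) := by
  set X : ℕ → ℤ := fun n => x (Fin.clamp n t)
  set Y : ℕ → ℤ := fun n => y (Fin.clamp n t)
  have hclamp (n : ℕ) (hn : n ≤ t) : Fin.clamp n t = ⟨n, by omega⟩ := Fin.ext (by simp [hn])
  have hEX (i : Fin t) : E i = X (i + 1) - X i := by
    simp only [X, hE, hclamp i i.is_lt.le, hclamp (i + 1) i.is_lt]; rfl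
  have hHY (i : Fin t) : H i = Y i - Y (i + 1) := by
    simp only [Y, hH, hclamp i i.is_lt.le, hclamp (i + 1) i.is_lt]; rfl
  have key := ncard_latticePoints_under_polygon (t := t) (X := X) (Y := Y)
    (E := fun n => X (n + 1) - X n) (H := fun n => Y n - Y (n + 1)) (N := N)
    (hx.monotone.comp Fin.clamp_monotone) (hy.antitone.comp_monotone Fin.clamp_monotone)
    (fun _ => rfl) (fun _ => rfl)
    (fun i hi => by simpa [X, hclamp i hi.le, hclamp (i + 1) hi] using hx (Nat.lt_succ_self i))
    (fun i hi a h₁ h₂ => by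
      simp only [X, Y, hclamp i hi.le, hclamp (i + 1) hi] at h₁ h₂ ⊢
      rw [hN ⟨i, hi⟩ a h₁ h₂]
      simp only [Fin.castSucc_mk, Fin.succ_mk]
      push_cast
      ring)
  have hset : {q : ℤ × ℤ | 1 ≤ q.1 ∧ q.1 ≤ x (Fin.last t) ∧ y (Fin.last t) < q.2
        ∧ (q.2 : ℚ) ≤ N (q.1 : ℚ)} =
      {q | X 0 < q.1 ∧ q.1 ≤ X t ∧ Y t < q.2 ∧ (q.2 : ℚ) ≤ N q.1} := by
    simp only [X, Y, Fin.clamp_eq_last t t le_rfl, hclamp 0 t.zero_le, Fin.zero_eta, hx0,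
      Int.lt_iff_add_one_le, zero_add]
  rw [hset, key]
  simp only [hEX, hHY, hd, Fin.lt_def, Finset.sum_range]

/-- **The index of a principal polygon counts lattice points.**
Let `(x_0,y_0), …, (x_t,y_t) ∈ ℤ²` with `0 = x_0 < x_1 < … < x_t`, `y_0 > y_1 > … > y_t`,
and strictly increasing slopes, and let `N` be the piecewise linear (convex) function with
these vertices.  With `E_i = x_i − x_{i−1}`, `H_i = y_{i−1} − y_i`, `d_i = gcd(E_i, H_i)`,
the number of lattice points `(a,b)` with `1 ≤ a ≤ x_t`, `b > y_t` and `b ≤ N(a)` equals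
`Σ_i (E_iH_i − E_i − H_i + d_i)/2 + Σ_{i<j} E_iH_j`, the index `ind(N)` of the polygon. -/
theorem stmt_13 (t : ℕ) (ht : 1 ≤ t) (x y : Fin (t + 1) → ℤ)
    (hx0 : x 0 = 0) (hx : StrictMono x) (hy : StrictAnti y)
    (hslopes : ∀ i j : Fin t, i < j →
      ((y i.succ - y i.castSucc : ℚ) / (x i.succ - x i.castSucc : ℚ))
        < ((y j.succ - y j.castSucc : ℚ) / (x j.succ - x j.castSucc : ℚ)))
    (N : ℚ → ℚ)
    (hN : ∀ i : Fin t, ∀ a : ℚ, (x i.castSucc : ℚ) ≤ a → a ≤ (x i.succ : ℚ) →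
      N a = (y i.castSucc : ℚ)
        + ((y i.succ : ℚ) - (y i.castSucc : ℚ)) / ((x i.succ : ℚ) - (x i.castSucc : ℚ))
          * (a - (x i.castSucc : ℚ)))
    (E H : Fin t → ℤ)
    (hE : ∀ i, E i = x i.succ - x i.castSucc)
    (hH : ∀ i, H i = y i.castSucc - y i.succ)
    (d : Fin t → ℤ) (hd : ∀ i, d i = Int.gcd (E i) (H i)) :
    ({q : ℤ × ℤ | 1 ≤ q.1 ∧ q.1 ≤ x (Fin.last t) ∧ y (Fin.last t) < q.2
        ∧ (q.2 : ℚ) ≤ N (q.1 : ℚ)}.ncard : ℤ)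
      = ∑ i, (E i * H i - E i - H i + d i) / 2
        + ∑ i, ∑ j, (if i < j then E i * H j else 0) :=
  stmt_13_general t x y hx0 hx hy N hN E H hE hH d hd
end
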